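/- arXiv:2109.06601 — 7 statements merged into one kernel-verified Lean document; each statement's English description precedes it below -/
import Mathlib

section
/- If G is an even-hole-free graph (containing no induced cycle with an even number of vertices) and α, β are two vertex covers of G, then the subgraph induced by α ⊕ β is a forest (contains no cycle). -/
/-- `S` is a vertex cover of `G`: every edge has at least one endpoint in `S`. -/
def IsVertexCover {V : Type*} (G : SimpleGraph V) (S : Set V) : Prop :=
  ∀ ⦃u v : V⦄, G.Adj u v → u ∈ S ∨ v ∈ S

/-- `G` is even-hole-free: it contains no induced cycle with an even number
of vertices, i.e., no induced subgraph of `G` is isomorphic to a cycle graph on an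
even number `n ≥ 3` (hence `n ≥ 4`) of vertices. -/
def EvenHoleFree {V : Type*} (G : SimpleGraph V) : Prop :=
  ¬ ∃ (n : ℕ) (W : Set V), Even n ∧ 3 ≤ n ∧
    Nonempty (G.induce W ≃g SimpleGraph.cycleGraph n)


/-!
Each edge inside `α ⊕ β` joins a vertex of `α \ β` to one of `β \ α`, so the induced
graph is bipartite and all its cycles are even. A shortest cycle of any graph has no chord,
since a chord would split it into two shorter cycles; so a bipartite graph with a cycle
contains an even hole, namely a shortest cycle.
-/

namespace SimpleGraph

variable {V : Type*} {G : SimpleGraph V}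

open Walk

theorem Walk.IsCycle.mem_edges_of_adj_of_length_eq_girth {v a b : V} {c : G.Walk v v}
    (hc : c.IsCycle) (hgirth : c.length = G.girth) (hab : G.Adj a b)
    (ha : a ∈ c.support) (hb : b ∈ c.support) : s(a, b) ∈ c.edges := by
  classical
  by_contra hchord
  set q := c.rotate b hb
  have hq : q.IsCycle := hc.rotate hb
  have haq : a ∈ q.support := (c.mem_support_rotate_iff b hb).mpr ha
  have hchord' : s(a, b) ∉ q.edges := fun h => hchord ((c.rotate_edges b hb).mem_iff.mp h)
  set t := q.takeUntil a haq
  set d := q.dropUntil a haq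
  have hsplit : t.append d = q := q.take_spec haq
  -- the chord closes both arcs `t : b ⟶ a` and `d : a ⟶ b` into cycles, of total length
  -- `c.length + 2 < 2 * c.length`
  have ht : (cons hab t).IsCycle := (cons_isCycle_iff _ _).mpr
    ⟨hq.isPath_takeUntil haq, fun h => hchord' (q.edges_takeUntil_subset_edges haq h)⟩
  have hd : (cons hab.symm d).IsCycle := (cons_isCycle_iff _ _).mpr
    ⟨IsCycle.isPath_of_append_right (not_nil_of_ne hab.ne.symm) (hsplit.symm ▸ hq),
      by rw [Sym2.eq_swap]; exact fun h => hchord' (q.edges_dropUntil_subset_edges haq h)⟩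
  have hlen : t.length + d.length = c.length := by
    rw [← length_append, hsplit, length_rotate]
  have := girth_le_length ht
  have := girth_le_length hd
  have := hc.three_le_length
  simp only [length_cons] at *
  omega

theorem cycleGraph.mem_support_cycle (n : ℕ) (i : Fin (n + 3)) :
    i ∈ (cycleGraph.cycle n).support := by
  have hi := i.isLt
  have hvert : (cycleGraph.cycle n).getVert (n + 3 - i) = i := by
    rw [cycleGraph.getVert_cycle (by omega), Fin.ext_iff]
    exact (congrArg (· % (n + 3)) (Nat.sub_sub_self hi.le)).trans (Nat.mod_eq_of_lt hi)
  exact hvert ▸ getVert_mem_support _ _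

theorem isIndContained_cycleGraph_girth (h : ¬ G.IsAcyclic) : cycleGraph G.girth ⊴ G := by
  obtain ⟨n, hn⟩ : ∃ n, G.girth = n + 3 :=
    ⟨G.girth - 3, by have := three_le_girth h; omega⟩
  obtain ⟨f⟩ : cycleGraph (n + 3) ⊑ G := by
    obtain ⟨v, c, hc, hlen⟩ := exists_girth_eq_length.mpr h
    exact (cycleGraph_isContained_iff (by omega)).mpr ⟨v, c, hc, by omega⟩
  set c := (cycleGraph.cycle n).map f.toHom
  have hc : c.IsCycle :=
    (isCycle_map_iff_of_injective f.injective).mpr cycleGraph.isCycle_cycle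
  have hgirth : c.length = G.girth := by simp [c, hn]
  have hmem (i : Fin (n + 3)) : f i ∈ c.support := by
    rw [Walk.support_map]
    exact List.mem_map_of_mem (cycleGraph.mem_support_cycle n i)
  rw [hn]
  refine ⟨⟨f.toEmbedding, fun {i j} => ⟨fun hij => ?_, f.toHom.map_adj⟩⟩⟩
  obtain ⟨e, he, hfe⟩ := List.mem_map.mp <| edges_map f.toHom _ ▸
    hc.mem_edges_of_adj_of_length_eq_girth hgirth hij (hmem i) (hmem j)
  have hfe' := Sym2.map.injective f.injective (hfe.trans (Sym2.map_mk _ _ _).symm)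
  exact (cycleGraph.cycle n).adj_of_mem_edges (hfe' ▸ he)

end SimpleGraph

theorem IsVertexCover.colorable_induce_symmDiff {V : Type*} {G : SimpleGraph V} {α β : Set V}
    (hα : IsVertexCover G α) (hβ : IsVertexCover G β) :
    (G.induce (symmDiff α β)).Colorable 2 := by
  classical
  refine (SimpleGraph.Coloring.mk (fun x => decide (x.1 ∈ α)) fun {x y} hxy => ?_).colorable
  have hx := x.2
  have hy := y.2
  rw [Set.mem_symmDiff] at hx hy
  have := hα hxy
  have := hβ hxy
  simp only [ne_eq, decide_eq_decide]
  tauto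

section

open SimpleGraph

variable {V W : Type*} {G : SimpleGraph V}

theorem evenHoleFree_iff :
    EvenHoleFree G ↔ ∀ n, Even n → 3 ≤ n → ¬ cycleGraph n ⊴ G := by
  simp only [EvenHoleFree, isIndContained_iff_exists_iso_induce, not_exists, not_and]
  exact forall_congr' fun n => ⟨fun h he hn s ⟨e⟩ => h s he hn ⟨e.symm⟩,
    fun h s he hn ⟨e⟩ => h he hn s ⟨e.symm⟩⟩

theorem EvenHoleFree.of_isIndContained {H : SimpleGraph W} (hG : EvenHoleFree G) (hHG : H ⊴ G) :
    EvenHoleFree H :=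
  evenHoleFree_iff.mpr fun n he hn hcH => evenHoleFree_iff.mp hG n he hn (hcH.trans hHG)

theorem EvenHoleFree.isAcyclic_of_colorable_two (hG : EvenHoleFree G) (h2 : G.Colorable 2) :
    G.IsAcyclic := by
  by_contra hcyc
  obtain ⟨v, c, -, hlen⟩ := exists_girth_eq_length.mpr hcyc
  have heven : Even G.girth := hlen ▸ two_colorable_iff_forall_loop_even.mp h2 v c
  exact evenHoleFree_iff.mp hG _ heven (three_le_girth hcyc) (isIndContained_cycleGraph_girth hcyc)

end

/-- If `G` is even-hole-free and `α, β` are vertex covers, then the subgraph induced by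
the symmetric difference `α ⊕ β` is a forest (acyclic). -/
theorem evenHoleFree_symmDiff_isAcyclic {V : Type*} (G : SimpleGraph V)
    (hG : EvenHoleFree G) (α β : Set V)
    (hα : IsVertexCover G α) (hβ : IsVertexCover G β) :
    (G.induce (symmDiff α β)).IsAcyclic := by
  have hH : EvenHoleFree (G.induce (symmDiff α β)) :=
    hG.of_isIndContained (SimpleGraph.Embedding.induce _).isIndContained
  exact hH.isAcyclic_of_colorable_two (hα.colorable_induce_symmDiff hβ)
end

section
/- If G is a claw-free graph (no induced K_{1,3}) and α, β are two vertex covers of G, then every vertex of the subgraph induced by α ⊕ β has degree at most 2 in that subgraph; consequently every connected component of G[α ⊕ β] is a path or a cycle. -/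
/-- `G` is claw-free: it has no induced subgraph isomorphic to `K_{1,3}`, i.e. no vertex `v`
with three pairwise distinct, pairwise non-adjacent neighbors. -/
def ClawFree {V : Type*} (G : SimpleGraph V) : Prop :=
  ¬ ∃ v a b c : V, a ≠ b ∧ a ≠ c ∧ b ≠ c ∧
      G.Adj v a ∧ G.Adj v b ∧ G.Adj v c ∧
      ¬ G.Adj a b ∧ ¬ G.Adj a c ∧ ¬ G.Adj b c

section

variable {V : Type*} {G : SimpleGraph V}

theorem IsVertexCover.not_adj_of_notMem {S : Set V} (hS : IsVertexCover G S) {u w : V}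
    (hu : u ∉ S) (hw : w ∉ S) : ¬ G.Adj u w :=
  fun huw => (hS huw).elim hu hw

theorem IsVertexCover.mem_iff_notMem_of_adj_of_mem_symmDiff {α β : Set V}
    (hα : IsVertexCover G α) (hβ : IsVertexCover G β) {x y : V}
    (hx : x ∈ symmDiff α β) (hy : y ∈ symmDiff α β) (hxy : G.Adj x y) : x ∈ α ↔ y ∉ α := by
  rw [Set.mem_symmDiff] at hx hy
  rcases hx with ⟨hxα, hxβ⟩ | ⟨hxβ, hxα⟩ <;> rcases hy with ⟨hyα, hyβ⟩ | ⟨hyβ, hyα⟩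
  · exact absurd hxy (hβ.not_adj_of_notMem hxβ hyβ)
  · simp [hxα, hyα]
  · simp [hxα, hyα]
  · exact absurd hxy (hα.not_adj_of_notMem hxα hyα)

theorem ClawFree.eq_or_eq_or_eq_of_not_adj (hG : ClawFree G) {v a b c : V}
    (hva : G.Adj v a) (hvb : G.Adj v b) (hvc : G.Adj v c)
    (hab : ¬ G.Adj a b) (hac : ¬ G.Adj a c) (hbc : ¬ G.Adj b c) : a = b ∨ a = c ∨ b = c := by
  by_contra! hne
  exact hG ⟨v, a, b, c, hne.1, hne.2.1, hne.2.2, hva, hvb, hvc, hab, hac, hbc⟩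

end

/-- If `G` is claw-free and `α, β` are vertex covers of `G`, then every vertex of the subgraph
induced by the symmetric difference `α ⊕ β` has degree at most 2 there: a vertex
`v ∈ α ⊕ β` cannot have three distinct neighbors inside `α ⊕ β`. -/
theorem clawFree_symmDiff_degree_le_two {V : Type*} (G : SimpleGraph V)
    (hG : ClawFree G) (α β : Set V)
    (hα : IsVertexCover G α) (hβ : IsVertexCover G β) :
    ∀ v ∈ symmDiff α β, ∀ a ∈ symmDiff α β, ∀ b ∈ symmDiff α β, ∀ c ∈ symmDiff α β,
      G.Adj v a → G.Adj v b → G.Adj v c → (a = b ∨ a = c ∨ b = c) := by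
  intro v hv a ha b hb c hc hva hvb hvc
  have side : ∀ {x y}, x ∈ symmDiff α β → y ∈ symmDiff α β → G.Adj x y → (x ∈ α ↔ y ∉ α) :=
    hα.mem_iff_notMem_of_adj_of_mem_symmDiff hβ
  have hsa := side hv ha hva
  have hsb := side hv hb hvb
  have hsc := side hv hc hvc
  refine hG.eq_or_eq_or_eq_of_not_adj hva hvb hvc ?_ ?_ ?_ <;> intro hadj
  · have := side ha hb hadj; tauto
  · have := side ha hc hadj; tauto
  · have := side hb hc hadj; tauto
end

section
/- Let G = (A ∪ B, E) be the path graph on 2n vertices viewed as a bipartite graph with parts A and B of size n each (both A and B are minimum vertex covers). Then for every 1 ≤ t < n, in any reconfiguration schedule from A to B consisting of t+1 batches, some intermediate vertex cover has size at least n(1 + 1/t). -/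
/-- `S` is an independent set of `G`. -/
def IsIndepSet {V : Type*} (G : SimpleGraph V) (S : Set V) : Prop :=
  ∀ ⦃u v : V⦄, u ∈ S → v ∈ S → ¬ G.Adj u v

/-- `f` is a vertex cover reconfiguration schedule of length `ℓ` from `α` to `β` in `G`:
each `f i` is a vertex cover, `f 0 = α`, `f ℓ = β`, and each batch `f i ⊕ f (i+1)` is an
independent set. -/
def IsVCSchedule {V : Type*} (G : SimpleGraph V) (ℓ : ℕ) (f : ℕ → Set V)
    (α β : Set V) : Prop :=
  f 0 = α ∧ f ℓ = β ∧ (∀ i ≤ ℓ, IsVertexCover G (f i)) ∧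
    ∀ i < ℓ, IsIndepSet G (symmDiff (f i) (f (i + 1)))

open Finset Function

theorem Nat.exists_lt_not_and_succ {p : ℕ → Prop} {n : ℕ} (h0 : ¬p 0) (hn : p n) :
    ∃ k < n, ¬p k ∧ p (k + 1) := by
  induction n with
  | zero => exact absurd hn h0
  | succ n ih =>
    by_cases h : p n
    · obtain ⟨k, hk, hk'⟩ := ih h
      exact ⟨k, by omega, hk'⟩
    · exact ⟨n, n.lt_succ_self, h, hn⟩

theorem Finset.exists_card_le_mul_ncard_of_forall_exists_mem {ι α : Type*} [Finite ι]
    [Nonempty ι] {s : Finset α} {D : α → Set ι} (hD : ∀ j, ∃ i ∈ s, j ∈ D i) :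
    ∃ i ∈ s, Nat.card ι ≤ #s * (D i).ncard := by
  obtain ⟨i₀, hi₀, -⟩ := hD (Classical.arbitrary ι)
  have hcover : Nat.card ι ≤ ∑ i ∈ s, (D i).ncard :=
    calc Nat.card ι = (Set.univ : Set ι).ncard := (Set.ncard_univ ι).symm
      _ ≤ (⋃ i ∈ s, D i).ncard := Set.ncard_le_ncard fun j _ => by simpa using hD j
      _ ≤ ∑ i ∈ s, (D i).ncard := s.set_ncard_biUnion_le D
  apply exists_le_of_sum_le ⟨i₀, hi₀⟩
  rw [sum_const, smul_eq_mul, ← mul_sum]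
  exact Nat.mul_le_mul_left _ hcover

theorem Set.ncard_add_ncard_setOf_mem_and_mem_le {ι V : Type*} [Finite ι] [Finite V]
    {a b : ι → V} (ha : Injective a) (hb : Injective b) (hab : ∀ i j, a i ≠ b j) {S : Set V}
    (hS : ∀ j, a j ∈ S ∨ b j ∈ S) :
    Nat.card ι + {j | a j ∈ S ∧ b j ∈ S}.ncard ≤ S.ncard := by
  set A := {j | a j ∈ S}
  set B := {j | b j ∈ S}
  have hunion : A ∪ B = Set.univ := Set.eq_univ_of_forall hS
  have hdisj : Disjoint (a '' A) (b '' B) := by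
    rw [Set.disjoint_left]
    rintro _ ⟨i, -, rfl⟩ ⟨j, -, hj⟩
    exact hab i j hj.symm
  calc Nat.card ι + {j | a j ∈ S ∧ b j ∈ S}.ncard = (A ∪ B).ncard + (A ∩ B).ncard := by
        rw [hunion, Set.ncard_univ]; rfl
    _ = (a '' A).ncard + (b '' B).ncard := by
        rw [Set.ncard_union_add_ncard_inter, Set.ncard_image_of_injective _ ha,
          Set.ncard_image_of_injective _ hb]
    _ = (a '' A ∪ b '' B).ncard := (Set.ncard_union_eq hdisj).symm
    _ ≤ S.ncard := Set.ncard_le_ncard (Set.union_subset (Set.image_subset_iff.2 fun _ h => h)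
        (Set.image_subset_iff.2 fun _ h => h))

section Schedule

variable {V : Type*} {G : SimpleGraph V} {ℓ : ℕ} {f : ℕ → Set V} {α β : Set V}

theorem IsVCSchedule.mem_succ_of_adj_of_notMem_of_mem_succ (hf : IsVCSchedule G ℓ f α β)
    {k : ℕ} (hk : k < ℓ) {u v : V} (huv : G.Adj u v) (hvk : v ∉ f k)
    (hvk' : v ∈ f (k + 1)) :
    u ∈ f (k + 1) := by
  have huk : u ∈ f k := (hf.2.2.1 k hk.le huv).resolve_right hvk
  refine by_contra fun huk' => hf.2.2.2 k hk ?_ ?_ huv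
  · exact Set.mem_symmDiff.2 (Or.inl ⟨huk, huk'⟩)
  · exact Set.mem_symmDiff.2 (Or.inr ⟨hvk', hvk⟩)

theorem IsVCSchedule.exists_mem_and_mem_of_adj (hf : IsVCSchedule G ℓ f α β) {u v : V}
    (huv : G.Adj u v) (hvα : v ∉ α) (hvβ : v ∈ β) (huβ : u ∉ β) :
    ∃ i, 0 < i ∧ i < ℓ ∧ u ∈ f i ∧ v ∈ f i := by
  obtain ⟨k, hk, hvk, hvk'⟩ :=
    Nat.exists_lt_not_and_succ (p := (v ∈ f ·)) (hf.1 ▸ hvα) (hf.2.1 ▸ hvβ)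
  have huk' := hf.mem_succ_of_adj_of_notMem_of_mem_succ hk huv hvk hvk'
  have hkℓ : k + 1 ≠ ℓ := by rintro rfl; exact huβ (hf.2.1 ▸ huk')
  exact ⟨k + 1, k.succ_pos, by omega, huk', hvk'⟩

end Schedule

theorem path_batch_lower_bound_general (n t : ℕ)
    (f : ℕ → Set (Fin (2 * n)))
    (hf : IsVCSchedule (SimpleGraph.pathGraph (2 * n)) (t + 1) f
      {v : Fin (2 * n) | Even v.val} {v : Fin (2 * n) | Odd v.val}) :
    ∃ i ≤ t + 1, n * (t + 1) ≤ t * (f i).ncard := by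
  obtain rfl | hn := n.eq_zero_or_pos
  · exact ⟨0, by omega, by simp⟩
  have : NeZero n := ⟨hn.ne'⟩
  let a : Fin n → Fin (2 * n) := fun j => ⟨2 * j, by omega⟩
  let b : Fin n → Fin (2 * n) := fun j => ⟨2 * j + 1, by omega⟩
  have hadj (j : Fin n) : (SimpleGraph.pathGraph (2 * n)).Adj (a j) (b j) :=
    SimpleGraph.pathGraph_adj.2 (Or.inl rfl)
  have hboth (j : Fin n) : ∃ i ∈ Icc 1 t, j ∈ {k | a k ∈ f i ∧ b k ∈ f i} := by
    obtain ⟨i, hi0, hit, hai, hbi⟩ := hf.exists_mem_and_mem_of_adj (hadj j)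
      (by simp [b]) (by simp [b]) (by simp [a, Nat.not_odd_iff_even])
    exact ⟨i, mem_Icc.2 ⟨hi0, by omega⟩, hai, hbi⟩
  obtain ⟨i, hi, hpigeon⟩ := exists_card_le_mul_ncard_of_forall_exists_mem hboth
  obtain ⟨-, hit⟩ := mem_Icc.1 hi
  have hsize := Set.ncard_add_ncard_setOf_mem_and_mem_le (a := a) (b := b)
    (fun j k h => Fin.ext (by simpa [a] using h)) (fun j k h => Fin.ext (by simpa [b] using h))
    (fun j k h => by simp [a, b, Fin.ext_iff] at h; omega)
    (fun j => hf.2.2.1 i (by omega) (hadj j))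
  rw [Nat.card_fin] at hpigeon hsize
  rw [Nat.card_Icc, Nat.add_sub_cancel] at hpigeon
  refine ⟨i, by omega, ?_⟩
  calc n * (t + 1) = t * n + n := by ring
    _ ≤ t * (n + {k | a k ∈ f i ∧ b k ∈ f i}.ncard) := by rw [mul_add]; omega
    _ ≤ t * (f i).ncard := Nat.mul_le_mul_left t hsize

/-- In the path graph on `2n` vertices with parts `A` (even positions) and `B` (odd
positions), for every `1 ≤ t < n`, any reconfiguration schedule from `A` to `B` with
`t + 1` batches has an intermediate vertex cover of size at least `n(1 + 1/t)`. -/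
theorem path_batch_lower_bound (n t : ℕ) (ht1 : 1 ≤ t) (htn : t < n)
    (f : ℕ → Set (Fin (2 * n)))
    (hf : IsVCSchedule (SimpleGraph.pathGraph (2 * n)) (t + 1) f
      {v : Fin (2 * n) | Even v.val} {v : Fin (2 * n) | Odd v.val}) :
    ∃ i ≤ t + 1, n * (t + 1) ≤ t * (f i).ncard :=
  path_batch_lower_bound_general n t f hf
end

section
/- Let G be a graph with vertex covers α and β, and let A = α \ β, B = β \ α, X = α ∩ β. Write M' = max(|A|,|B|), m' = min(|A|,|B|) and suppose the induced graph G[A ∪ B] has h > 0 edges and arboricity λ. Then |X| + M' + m' − m'·M'/h + 1 ≤ (2 − 1/(2λ))·max(|α|,|β|) + 1. -/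
/-- `G` has arboricity at most `m`: its edge set can be covered by `m` forests. -/
def HasArboricityLE {V : Type*} (G : SimpleGraph V) (m : ℕ) : Prop :=
  ∃ F : Fin m → SimpleGraph V, (∀ i, F i ≤ G ∧ (F i).IsAcyclic) ∧
    ∀ e ∈ G.edgeSet, ∃ i, e ∈ (F i).edgeSet

/-!
A forest has fewer edges than vertices, so a graph covered by `λ` forests on the `m' + M'`
vertices of `α ∆ β` has `h ≤ λ (m' + M') ≤ 2 λ M'` edges. Hence `m' M' / h ≥ m' / (2λ)`, and
since `max(|α|, |β|) = M' + |X|` the claim reduces to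
`(M' + |X| - m') (1 - 1/(2λ)) ≥ 0`, which holds because `m' ≤ M'` and `λ ≥ 1`.
-/

namespace SimpleGraph

variable {V : Type*} [Finite V]

theorem IsAcyclic.ncard_edgeSet_le {G : SimpleGraph V} (hG : G.IsAcyclic) :
    G.edgeSet.ncard ≤ Nat.card V := by
  -- extend `G` to a spanning tree of the complete graph, which has `|V| - 1` edges
  cases isEmpty_or_nonempty V
  · simp [Set.eq_empty_of_isEmpty G.edgeSet]
  obtain ⟨T, hGT, -, hT⟩ := connected_top.exists_isTree_le_of_le_of_isAcyclic le_top hG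
  have hTcard := (isTree_iff_connected_and_card.mp hT).2
  calc G.edgeSet.ncard ≤ T.edgeSet.ncard := Set.ncard_le_ncard (edgeSet_mono hGT)
    _ ≤ Nat.card V := by rw [← Nat.card_coe_set_eq]; omega

end SimpleGraph

theorem HasArboricityLE.ncard_edgeSet_le {V : Type*} [Finite V] {G : SimpleGraph V} {k : ℕ}
    (hG : HasArboricityLE G k) : G.edgeSet.ncard ≤ k * Nat.card V := by
  obtain ⟨F, hF, hcover⟩ := hG
  calc G.edgeSet.ncard ≤ (⋃ i, (F i).edgeSet).ncard :=
        Set.ncard_le_ncard (fun e he ↦ Set.mem_iUnion.mpr (hcover e he))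
    _ ≤ ∑ i, (F i).edgeSet.ncard := Set.ncard_iUnion_le_of_fintype _
    _ ≤ ∑ _i : Fin k, Nat.card V := Finset.sum_le_sum fun i _ ↦ (hF i).2.ncard_edgeSet_le
    _ = k * Nat.card V := by simp
namespace Set

variable {α : Type*} (s t : Set α)

theorem ncard_symmDiff [Finite α] : (symmDiff s t).ncard = (s \ t).ncard + (t \ s).ncard :=
  ncard_union_eq disjoint_sdiff_sdiff

theorem max_ncard_eq_max_ncard_sdiff_add_ncard_inter [Finite α] :
    max s.ncard t.ncard = max (s \ t).ncard (t \ s).ncard + (s ∩ t).ncard := by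
  rw [← ncard_inter_add_ncard_sdiff_eq_ncard s t, ← ncard_inter_add_ncard_sdiff_eq_ncard t s,
    inter_comm t s, add_comm, add_comm (s ∩ t).ncard, max_add_add_right]

end Set

theorem add_add_sub_mul_div_le_two_sub_div_mul {x m M h l : ℝ} (hx : 0 ≤ x) (hm : 0 ≤ m)
    (hmM : m ≤ M) (hh : 0 < h) (hl : 1 ≤ l) (hhM : h ≤ 2 * l * M) :
    x + M + m - m * M / h ≤ (2 - 1 / (2 * l)) * (M + x) := by
  have hl' : 0 < 2 * l := by linarith
  have hdiv : m / (2 * l) ≤ m * M / h := by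
    rw [div_le_div_iff₀ hl' hh]
    nlinarith
  have hfac : 0 ≤ 1 - 1 / (2 * l) := by
    rw [sub_nonneg, div_le_one hl']
    linarith
  have hslack : 0 ≤ (M + x - m) * (1 - 1 / (2 * l)) := mul_nonneg (by linarith) hfac
  calc x + M + m - m * M / h ≤ x + M + m - m / (2 * l) := by linarith
    _ = (2 - 1 / (2 * l)) * (M + x) - (M + x - m) * (1 - 1 / (2 * l)) := by ring
    _ ≤ (2 - 1 / (2 * l)) * (M + x) := by linarith

theorem greedy_cost_bound_general {V : Type*} [Fintype V] (G : SimpleGraph V) (α β : Set V)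
    (lam h : ℕ)
    (hh : h = (G.induce (symmDiff α β)).edgeSet.ncard) (hpos : 0 < h)
    (harb : HasArboricityLE (G.induce (symmDiff α β)) lam) :
    (((α ∩ β).ncard : ℝ) + (max ((α \ β).ncard) ((β \ α).ncard) : ℕ)
        + (min ((α \ β).ncard) ((β \ α).ncard) : ℕ)
        - ((min ((α \ β).ncard) ((β \ α).ncard) : ℕ) : ℝ)
          * ((max ((α \ β).ncard) ((β \ α).ncard) : ℕ) : ℝ) / h + 1)
      ≤ (2 - 1 / (2 * (lam : ℝ))) * ((max α.ncard β.ncard : ℕ) : ℝ) + 1 := by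
  set a := (α \ β).ncard
  set b := (β \ α).ncard
  have hedges : h ≤ lam * (a + b) := by
    simpa only [← hh, Nat.card_coe_set_eq, Set.ncard_symmDiff] using harb.ncard_edgeSet_le
  have hlam : 1 ≤ lam := Nat.pos_of_mul_pos_right (hpos.trans_le hedges)
  have hedges_max : h ≤ 2 * lam * max a b := by
    have : a + b ≤ 2 * max a b := by omega
    calc h ≤ lam * (a + b) := hedges
      _ ≤ lam * (2 * max a b) := Nat.mul_le_mul_left lam this
      _ = 2 * lam * max a b := by ring
  rw [Set.max_ncard_eq_max_ncard_sdiff_add_ncard_inter α β]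
  have key := add_add_sub_mul_div_le_two_sub_div_mul (x := ((α ∩ β).ncard : ℝ))
    (Nat.cast_nonneg _) (Nat.cast_nonneg _) (Nat.cast_le.mpr min_le_max)
    (Nat.cast_pos.mpr hpos) (Nat.one_le_cast.mpr hlam) (by exact_mod_cast hedges_max)
  push_cast at key ⊢
  linarith

/-- Cost bound for the greedy schedule: with `A = α \ β`, `B = β \ α`, `X = α ∩ β`,
`M' = max(|A|,|B|)`, `m' = min(|A|,|B|)`, if the graph induced on `α ⊕ β` has `h > 0` edges
and arboricity `λ`, then `|X| + M' + m' − m'·M'/h + 1 ≤ (2 − 1/(2λ))·max(|α|,|β|) + 1`. -/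
theorem greedy_cost_bound {V : Type*} [Fintype V] (G : SimpleGraph V) (α β : Set V)
    (hα : IsVertexCover G α) (hβ : IsVertexCover G β) (lam h : ℕ)
    (hh : h = (G.induce (symmDiff α β)).edgeSet.ncard) (hpos : 0 < h)
    (harb : HasArboricityLE (G.induce (symmDiff α β)) lam) :
    (((α ∩ β).ncard : ℝ) + (max ((α \ β).ncard) ((β \ α).ncard) : ℕ)
        + (min ((α \ β).ncard) ((β \ α).ncard) : ℕ)
        - ((min ((α \ β).ncard) ((β \ α).ncard) : ℕ) : ℝ)
          * ((max ((α \ β).ncard) ((β \ α).ncard) : ℕ) : ℝ) / h + 1)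
      ≤ (2 - 1 / (2 * (lam : ℝ))) * ((max α.ncard β.ncard : ℕ) : ℝ) + 1 :=
  greedy_cost_bound_general G α β lam h hh hpos harb
end

section
/- Let G be a graph with disjoint sets A, B such that G[A ∪ B] is bipartite with parts A, B and has h > 0 edges. Order A by non-decreasing degree and let A_1 be the set of the ξ = ⌊|A||B|/(h+|A|)⌋ lowest-degree vertices of A, and B_1 = N(A_1) ∩ B. Then |B_1| ≤ ξh/|A|, and consequently max(|A| + |B_1|, |A| + |B| − ξ) ≤ |A| + |B| − |A||B|/(h+|A|) + 1. -/
/-!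
Every vertex of `B₁` is a neighbour of some vertex of `A₁`, so `|B₁|` is at most the number of
`A₁`–`B` edges. Since `A₁` consists of the lowest-degree vertices of `A`, the degree function
antivaries with the indicator of `A₁`, and Chebyshev's sum inequality bounds these edges by the
share `ξ/|A|` of all `h` edges of `G[A ∪ B]`. The rest is arithmetic: `ξ (h + |A|) ≤ |A||B|`
turns `ξh/|A|` into `|B| - |A||B|/(h + |A|)`, and `|A||B|/(h + |A|) < ξ + 1`.
-/

open Finset

theorem Finset.card_mul_sum_le_card_mul_sum_of_forall_le {ι α : Type*} [DecidableEq ι]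
    [Semiring α] [LinearOrder α] [IsStrictOrderedRing α] [ExistsAddOfLE α]
    {s t : Finset ι} {f : ι → α} (hst : s ⊆ t) (hf : ∀ u ∈ s, ∀ v ∈ t, v ∉ s → f u ≤ f v) :
    #t * ∑ i ∈ s, f i ≤ #s * ∑ i ∈ t, f i := by
  have hanti : AntivaryOn f (fun i ↦ if i ∈ s then (1 : α) else 0) t := by
    intro i hi j _ hij
    have hjs : j ∈ s := by
      by_contra hjs
      simp only [hjs, if_false] at hij
      split_ifs at hij <;> exact hij.not_ge (by simp)
    have his : i ∉ s := fun his ↦ by simp [his, hjs] at hij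
    exact hf j hjs i hi his
  have := hanti.card_mul_sum_le_sum_mul_sum
  simp only [mul_ite, mul_one, mul_zero, sum_ite_mem, inter_eq_right.mpr hst, ← cast_card] at this
  rwa [← Nat.cast_comm] at this

theorem Finset.card_filter_exists_le_sum_card_filter {α β : Type*} [DecidableEq β]
    (r : α → β → Prop) [∀ a, DecidablePred (r a)] (s : Finset α) (t : Finset β) :
    #{b ∈ t | ∃ a ∈ s, r a b} ≤ ∑ a ∈ s, #{b ∈ t | r a b} := by
  refine (card_le_card fun b hb ↦ ?_).trans card_biUnion_le
  simp only [mem_filter, mem_biUnion] at hb ⊢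
  obtain ⟨hbt, a, has, hab⟩ := hb
  exact ⟨a, has, hbt, hab⟩

namespace SimpleGraph

variable {V : Type*} (G : SimpleGraph V) [DecidableRel G.Adj]

theorem sum_card_filter_adj_le_ncard_edgeSet_induce {s t : Finset V} (hst : Disjoint s t) :
    ∑ a ∈ s, #{b ∈ t | G.Adj a b} ≤ (G.induce (↑s ∪ ↑t : Set V)).edgeSet.ncard := by
  have hsum : ∑ a ∈ s, #{b ∈ t | G.Adj a b} = #(G.interedges s t) := by
    simp only [interedges_def, card_filter, sum_product]
  rw [hsum, ← Set.ncard_coe_finset,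
    ← Set.ncard_image_of_injective _ (Sym2.map.injective Subtype.val_injective)]
  refine Set.ncard_le_ncard_of_injOn (fun e ↦ s(e.1, e.2)) ?_ ?_ (Set.toFinite _)
  · rintro ⟨a, b⟩ hab
    rw [mem_coe, mk_mem_interedges_iff] at hab
    exact ⟨s(⟨a, Or.inl hab.1⟩, ⟨b, Or.inr hab.2.1⟩), hab.2.2, rfl⟩
  · rintro ⟨a, b⟩ hab ⟨a', b'⟩ hab' heq
    rw [mem_coe, mk_mem_interedges_iff] at hab hab'
    rcases Sym2.eq_iff.mp heq with ⟨rfl, rfl⟩ | ⟨rfl, -⟩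
    · rfl
    · exact absurd hab'.2.1 (Finset.disjoint_left.mp hst hab.1)

theorem card_filter_exists_adj_le_mul_div {K : Type*} [Semifield K] [LinearOrder K]
    [IsStrictOrderedRing K] [DecidableEq V] {s t s₁ : Finset V}
    (hst : Disjoint s t) (hs₁ : s₁ ⊆ s)
    (hlow : ∀ u ∈ s₁, ∀ v ∈ s, v ∉ s₁ → #{b ∈ t | G.Adj u b} ≤ #{b ∈ t | G.Adj v b}) :
    (#{b ∈ t | ∃ a ∈ s₁, G.Adj a b} : K) ≤
      #s₁ * (G.induce (↑s ∪ ↑t : Set V)).edgeSet.ncard / #s := by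
  rcases s.eq_empty_or_nonempty with rfl | hs
  · simp [subset_empty.mp hs₁]
  rw [le_div_iff₀ (by simpa using hs)]
  exact_mod_cast calc
    #{b ∈ t | ∃ a ∈ s₁, G.Adj a b} * #s ≤ (∑ a ∈ s₁, #{b ∈ t | G.Adj a b}) * #s := by
      gcongr; exact card_filter_exists_le_sum_card_filter _ _ _
    _ ≤ #s₁ * ∑ a ∈ s, #{b ∈ t | G.Adj a b} := by
      rw [mul_comm]; exact_mod_cast card_mul_sum_le_card_mul_sum_of_forall_le hs₁ hlow
    _ ≤ #s₁ * (G.induce (↑s ∪ ↑t : Set V)).edgeSet.ncard := by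
      gcongr; exact G.sum_card_filter_adj_le_ncard_edgeSet_induce hst

end SimpleGraph

theorem mul_div_le_sub_mul_div_of_mul_add_le {K : Type*} [Field K] [LinearOrder K]
    [IsStrictOrderedRing K] {n m h ξ : K} (hn : 0 ≤ n) (hm : 0 ≤ m) (hh : 0 ≤ h)
    (hξ : ξ * (h + n) ≤ n * m) : ξ * h / n ≤ m - n * m / (h + n) := by
  rcases hn.eq_or_lt with rfl | hn
  · simpa using hm
  have hrhs : m - n * m / (h + n) = m * h / (h + n) := by field_simp; ring
  rw [hrhs, div_le_div_iff₀ hn (by positivity)]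
  nlinarith

theorem Nat.cast_div_lt_cast_div_add_one {K : Type*} [Semifield K] [LinearOrder K]
    [IsStrictOrderedRing K] [FloorSemiring K] (a b : ℕ) : (a : K) / b < (a / b : ℕ) + 1 := by
  rw [← Nat.floor_div_eq_div (K := K)]
  exact Nat.lt_floor_add_one _

theorem four_batch_cost_bound_general {V : Type*} [Fintype V] (G : SimpleGraph V) (A B : Set V)
    (hdisj : Disjoint A B)
    (h : ℕ) (hh : h = (G.induce (A ∪ B)).edgeSet.ncard)
    (A₁ : Set V) (hA₁ : A₁ ⊆ A)
    (hξ : A₁.ncard = A.ncard * B.ncard / (h + A.ncard))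
    (hlow : ∀ u ∈ A₁, ∀ v ∈ A \ A₁,
      (G.neighborSet u ∩ B).ncard ≤ (G.neighborSet v ∩ B).ncard) :
    ((({b ∈ B | ∃ a ∈ A₁, G.Adj a b}).ncard : ℝ) ≤ (A₁.ncard : ℝ) * h / A.ncard) ∧
    max ((A.ncard : ℝ) + ({b ∈ B | ∃ a ∈ A₁, G.Adj a b}).ncard)
        ((A.ncard : ℝ) + B.ncard - (A.ncard * B.ncard / (h + A.ncard) : ℕ))
      ≤ (A.ncard : ℝ) + B.ncard
          - (A.ncard : ℝ) * (B.ncard : ℝ) / ((h : ℝ) + A.ncard) + 1 := by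
  classical
  obtain ⟨s, rfl⟩ := A.toFinite.exists_finset_coe
  obtain ⟨t, rfl⟩ := B.toFinite.exists_finset_coe
  obtain ⟨s₁, rfl⟩ := A₁.toFinite.exists_finset_coe
  have hdeg (v : V) : (G.neighborSet v ∩ t).ncard = #{b ∈ t | G.Adj v b} := by
    rw [← Set.ncard_coe_finset, coe_filter]
    congr 1
    ext b
    simp [and_comm]
  have hB₁ : {b ∈ (t : Set V) | ∃ a ∈ (s₁ : Set V), G.Adj a b} =
      ↑{b ∈ t | ∃ a ∈ s₁, G.Adj a b} := by
    simp
  simp only [Set.ncard_coe_finset, hB₁, hdeg] at hξ hlow ⊢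
  have hB₁_le : (#{b ∈ t | ∃ a ∈ s₁, G.Adj a b} : ℝ) ≤ #s₁ * h / #s := hh ▸
    G.card_filter_exists_adj_le_mul_div (disjoint_coe.mp hdisj) (coe_subset.mp hA₁)
      fun u hu v hv hv₁ ↦ hlow u hu v ⟨hv, hv₁⟩
  have hξ_le : (#s₁ : ℝ) * (h + #s) ≤ #s * #t := by
    exact_mod_cast hξ ▸ Nat.div_mul_le_self _ _
  refine ⟨hB₁_le, max_le ?_ ?_⟩
  · linarith [mul_div_le_sub_mul_div_of_mul_add_le (by positivity) (by positivity) (by positivity)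
      hξ_le]
  · have := Nat.cast_div_lt_cast_div_add_one (K := ℝ) (#s * #t) (h + #s)
    push_cast at this
    linarith

/-- Lowest-degree prefix bound for the 4-batch schedule: with `ξ = ⌊|A||B|/(h+|A|)⌋`,
`A₁` the set of the `ξ` lowest-degree vertices of `A`, and `B₁ = N(A₁) ∩ B`, we have
`|B₁| ≤ ξh/|A|` and `max(|A| + |B₁|, |A| + |B| − ξ) ≤ |A| + |B| − |A||B|/(h+|A|) + 1`. -/
theorem four_batch_cost_bound {V : Type*} [Fintype V] (G : SimpleGraph V) (A B : Set V)
    (hdisj : Disjoint A B)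
    (hbip : ∀ u ∈ A ∪ B, ∀ v ∈ A ∪ B, G.Adj u v → (u ∈ A ∧ v ∈ B) ∨ (u ∈ B ∧ v ∈ A))
    (h : ℕ) (hh : h = (G.induce (A ∪ B)).edgeSet.ncard) (hpos : 0 < h)
    (A₁ : Set V) (hA₁ : A₁ ⊆ A)
    (hξ : A₁.ncard = A.ncard * B.ncard / (h + A.ncard))
    (hlow : ∀ u ∈ A₁, ∀ v ∈ A \ A₁,
      (G.neighborSet u ∩ B).ncard ≤ (G.neighborSet v ∩ B).ncard) :
    ((({b ∈ B | ∃ a ∈ A₁, G.Adj a b}).ncard : ℝ) ≤ (A₁.ncard : ℝ) * h / A.ncard) ∧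
    max ((A.ncard : ℝ) + ({b ∈ B | ∃ a ∈ A₁, G.Adj a b}).ncard)
        ((A.ncard : ℝ) + B.ncard - (A.ncard * B.ncard / (h + A.ncard) : ℕ))
      ≤ (A.ncard : ℝ) + B.ncard
          - (A.ncard : ℝ) * (B.ncard : ℝ) / ((h : ℝ) + A.ncard) + 1 :=
  four_batch_cost_bound_general G A B hdisj h hh A₁ hA₁ hξ hlow
end

section
/- Let G = (A ∪ B, E) be a d-regular bipartite graph with |A| = |B| = n whose incidence matrix M satisfies: the second-largest eigenvalue δ_2 of M·Mᵀ is at most 4(d−1) (i.e., G is Ramanujan) and d ≥ 4. Suppose every subset S ⊆ A satisfies |N(S)| ≥ n(1 − (1 + (|S|/n)·d²/(4(d−1)))^{−1}). Then every vertex cover reconfiguration schedule from A to B contains an intermediate vertex cover of size at least n(2 − 4/(√(d+1)+1)). -/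
/-!
Let `η = 2/(√(d+1)+1)`, the positive root of `(d/4)η² + η = 1`. Along a schedule the number
of vertices of `A` removed so far goes from `0` to `n`; take the first step `V_i → V_{i+1}` at
which it reaches `ηn`, and put `S = A \ V_{i+1}`. Since the vertices removed from `A` and those
added to `B` in one step form an independent set, every neighbour of `S` already lies in the
cover `V_i`. So `V_i` contains more than `(1-η)n` vertices of `A` and, by the expansion
hypothesis and the choice of `η`, at least `(1-η)n` vertices of `B`.
-/

open Set

/-- The paper's `η`. -/
noncomputable def expansionThreshold (d : ℝ) : ℝ := 2 / (Real.sqrt (d + 1) + 1)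

lemma expansionThreshold_pos (d : ℝ) : 0 < expansionThreshold d := by
  unfold expansionThreshold
  positivity

lemma expansionThreshold_le_one {d : ℝ} (hd : 0 ≤ d) : expansionThreshold d ≤ 1 := by
  have hs : 1 ≤ Real.sqrt (d + 1) := Real.one_le_sqrt.2 (by linarith)
  unfold expansionThreshold
  rw [div_le_one (by positivity)]
  linarith

lemma expansionThreshold_quadratic {d : ℝ} (hd : -1 ≤ d) :
    d / 4 * expansionThreshold d ^ 2 + expansionThreshold d = 1 := by
  have hs : Real.sqrt (d + 1) ^ 2 = d + 1 := Real.sq_sqrt (by linarith)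
  have hpos : 0 < Real.sqrt (d + 1) + 1 := by positivity
  unfold expansionThreshold
  field_simp
  nlinarith

/-- The expansion bound at a set of size `s ≥ ηn` yields `(1 - η) n` neighbours, since
`d² / (4(d - 1)) ≥ d / 4` and `η (1 + η d / 4) = 1`. -/
lemma mul_one_sub_expansionThreshold_le {d n s : ℝ} (hd : 1 < d) (hn : 0 ≤ n)
    (hs : expansionThreshold d * n ≤ s) :
    n * (1 - expansionThreshold d) ≤ n * (1 - (1 + s / n * d ^ 2 / (4 * (d - 1)))⁻¹) := by
  rcases hn.eq_or_lt with rfl | hn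
  · simp
  set η := expansionThreshold d
  have hη : 0 < η := expansionThreshold_pos d
  have hquad : d / 4 * η ^ 2 + η = 1 := expansionThreshold_quadratic (by linarith)
  have hc : d / 4 ≤ d ^ 2 / (4 * (d - 1)) := by
    rw [div_le_div_iff₀ (by norm_num) (by linarith)]
    nlinarith
  have hsn : η ≤ s / n := (le_div_iff₀ hn).2 hs
  have hinv : (1 + s / n * d ^ 2 / (4 * (d - 1)))⁻¹ ≤ η := by
    have hc0 : 0 < d ^ 2 / (4 * (d - 1)) := (by linarith : (0 : ℝ) < d / 4).trans_le hc
    rw [mul_div_assoc, inv_le_comm₀ (by nlinarith [mul_pos (hη.trans_le hsn) hc0]) hη]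
    calc η⁻¹ = 1 + η * (d / 4) := by field_simp; linarith
      _ ≤ 1 + s / n * (d ^ 2 / (4 * (d - 1))) := by
        gcongr 1 + ?_
        exact mul_le_mul hsn hc (by linarith) (hη.le.trans hsn)
  gcongr

lemma exists_lt_not_and_succ_of_not_zero {p : ℕ → Prop} :
    ∀ {ℓ : ℕ}, ¬ p 0 → p ℓ → ∃ i < ℓ, ¬ p i ∧ p (i + 1)
  | 0, h0, hℓ => absurd hℓ h0
  | ℓ + 1, h0, hℓ => by
    by_cases h : p ℓ
    · obtain ⟨i, hi, hpi⟩ := exists_lt_not_and_succ_of_not_zero h0 h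
      exact ⟨i, hi.trans (Nat.lt_succ_self ℓ), hpi⟩
    · exact ⟨ℓ, Nat.lt_succ_self ℓ, h, hℓ⟩

lemma mem_of_adj_of_not_mem_of_isIndepSet_symmDiff {V : Type*} {G : SimpleGraph V} {X Y : Set V}
    (hX : IsVertexCover G X) (hY : IsVertexCover G Y) (hXY : IsIndepSet G (symmDiff X Y))
    {a b : V} (hab : G.Adj a b) (ha : a ∉ Y) : b ∈ X := by
  have hbY : b ∈ Y := (hY hab).resolve_left ha
  by_contra hbX
  have haX : a ∈ X := (hX hab).resolve_right hbX
  exact hXY (mem_symmDiff.2 (Or.inl ⟨haX, ha⟩)) (mem_symmDiff.2 (Or.inr ⟨hbY, hbX⟩)) hab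

lemma ncard_add_ncard_le_ncard_add_ncard_diff {α : Type*} [Finite α] {A B N X : Set α}
    (hAB : Disjoint A B) (hNB : N ⊆ B) (hNX : N ⊆ X) :
    A.ncard + N.ncard ≤ X.ncard + (A \ X).ncard := by
  have hsplit := ncard_inter_add_ncard_sdiff_eq_ncard A X
  have hdisj : Disjoint (A ∩ X) N := (hAB.mono_right hNB).mono_left inter_subset_left
  have hle : (A ∩ X ∪ N).ncard ≤ X.ncard :=
    ncard_le_ncard (union_subset inter_subset_right hNX)
  rw [ncard_union_eq hdisj] at hle
  omega

theorem ramanujan_schedule_lower_bound_general {V : Type*} [Fintype V] (G : SimpleGraph V)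
    (n d : ℕ) (hd : 4 ≤ d) (A B : Set V)
    (hdisj : Disjoint A B)
    (hA : A.ncard = n)
    (hexp : ∀ S ⊆ A, (({b ∈ B | ∃ a ∈ S, G.Adj a b}).ncard : ℝ) ≥
      (n : ℝ) * (1 - (1 + ((S.ncard : ℝ) / n) * (d : ℝ) ^ 2 / (4 * ((d : ℝ) - 1)))⁻¹))
    (ℓ : ℕ) (f : ℕ → Set V) (hf : IsVCSchedule G ℓ f A B) :
    ∃ i ≤ ℓ, ((f i).ncard : ℝ) ≥ (n : ℝ) * (2 - 4 / (Real.sqrt ((d : ℝ) + 1) + 1)) := by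
  obtain ⟨hf0, hfℓ, hcov, hind⟩ := hf
  rcases Nat.eq_zero_or_pos n with rfl | hn
  · exact ⟨0, Nat.zero_le ℓ, by simp⟩
  set η := expansionThreshold d
  obtain ⟨i, hiℓ, hi, hi1⟩ := exists_lt_not_and_succ_of_not_zero
    (p := fun i ↦ η * n ≤ ((A \ f i).ncard : ℝ)) (ℓ := ℓ)
    (by simpa [hf0] using mul_pos (expansionThreshold_pos d) (Nat.cast_pos.2 hn))
    (by simpa [hfℓ, hdisj.sdiff_eq_left, hA] using
      mul_le_of_le_one_left n.cast_nonneg (expansionThreshold_le_one d.cast_nonneg))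
  set S := A \ f (i + 1)
  set N := {b ∈ B | ∃ a ∈ S, G.Adj a b}
  have hNS : (n : ℝ) * (1 - η) ≤ N.ncard :=
    (mul_one_sub_expansionThreshold_le (by norm_cast; omega) n.cast_nonneg hi1).trans
      (hexp S sdiff_subset)
  have hN : N ⊆ f i := by
    rintro b ⟨-, a, ⟨-, ha⟩, hab⟩
    exact mem_of_adj_of_not_mem_of_isIndepSet_symmDiff (hcov i hiℓ.le) (hcov (i + 1) hiℓ)
      (hind i hiℓ) hab ha
  have hcount : (n : ℝ) + N.ncard ≤ (f i).ncard + (A \ f i).ncard := by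
    exact_mod_cast hA ▸ ncard_add_ncard_le_ncard_add_ncard_diff hdisj (sep_subset B _) hN
  refine ⟨i, hiℓ.le, ?_⟩
  have h4η : 4 / (Real.sqrt ((d : ℝ) + 1) + 1) = 2 * η := by
    simp only [η, expansionThreshold]; ring
  rw [h4η]
  linarith [not_le.1 hi]

/-- In a `d`-regular bipartite (Ramanujan) graph with parts `A`, `B` of size `n`, `d ≥ 4`,
satisfying the vertex expansion bound `|N(S)| ≥ n(1 − (1 + (|S|/n)·d²/(4(d−1)))⁻¹)` for all
`S ⊆ A`, every vertex cover reconfiguration schedule from `A` to `B` has an intermediate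
vertex cover of size at least `n(2 − 4/(√(d+1)+1))`. -/
theorem ramanujan_schedule_lower_bound {V : Type*} [Fintype V] (G : SimpleGraph V)
    (n d : ℕ) (hd : 4 ≤ d) (A B : Set V)
    (hdisj : Disjoint A B) (hcover : A ∪ B = Set.univ)
    (hA : A.ncard = n) (hB : B.ncard = n)
    (hbip : ∀ u v : V, G.Adj u v → (u ∈ A ∧ v ∈ B) ∨ (u ∈ B ∧ v ∈ A))
    (hreg : ∀ v : V, (G.neighborSet v).ncard = d)
    (hexp : ∀ S ⊆ A, (({b ∈ B | ∃ a ∈ S, G.Adj a b}).ncard : ℝ) ≥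
      (n : ℝ) * (1 - (1 + ((S.ncard : ℝ) / n) * (d : ℝ) ^ 2 / (4 * ((d : ℝ) - 1)))⁻¹))
    (ℓ : ℕ) (f : ℕ → Set V) (hf : IsVCSchedule G ℓ f A B) :
    ∃ i ≤ ℓ, ((f i).ncard : ℝ) ≥ (n : ℝ) * (2 - 4 / (Real.sqrt ((d : ℝ) + 1) + 1)) :=
  ramanujan_schedule_lower_bound_general G n d hd A B hdisj hA hexp ℓ f hf
end

section
/- Let G be a graph with vertex covers α, β and let D = α ⊕ β. Suppose C_1, …, C_k, S is a partition of V such that there is no edge between C_i \ Z and C_j \ Z for i ≠ j, where Z = V \ D. If each induced graph G[C_i] admits a monotone reconfiguration schedule from α ∩ C_i to β ∩ C_i whose intermediate covers (within C_i) have size at most η·max(|α ∩ C_i|, |β ∩ C_i|) + c, then G admits a reconfiguration schedule from α to β whose intermediate vertex covers have size at most η·max(|α|,|β|) + |S| + k·c. -/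
open scoped symmDiff Function

section Graph

variable {V : Type*} {G : SimpleGraph V}

lemma IsIndepSet.mono {s t : Set V} (ht : IsIndepSet G t) (hst : s ⊆ t) : IsIndepSet G s :=
  fun _ _ hu hv => ht (hst hu) (hst hv)

lemma isIndepSet_iUnion {ι : Type*} {s : ι → Set V} (hs : ∀ i, IsIndepSet G (s i))
    (hsep : Pairwise fun i j => ∀ u ∈ s i, ∀ v ∈ s j, ¬ G.Adj u v) :
    IsIndepSet G (⋃ i, s i) := by
  intro u v hu hv
  obtain ⟨i, hu⟩ := Set.mem_iUnion.1 hu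
  obtain ⟨j, hv⟩ := Set.mem_iUnion.1 hv
  obtain rfl | hij := eq_or_ne i j
  · exact hs i hu hv
  · exact hsep hij u hu v hv

lemma IsVertexCover.isIndepSet_compl {s : Set V} (h : IsVertexCover G s) : IsIndepSet G sᶜ :=
  fun _ _ hu hv huv => (h huv).elim hu hv

lemma IsVertexCover.isIndepSet_symmDiff_union {s : Set V} (h : IsVertexCover G s) (t : Set V) :
    IsIndepSet G (s ∆ (s ∪ t)) :=
  h.isIndepSet_compl.mono fun v hv => by
    simp only [Set.mem_symmDiff, Set.mem_union] at hv
    tauto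

lemma IsVertexCover.mem_symmDiff_of_adj {α β : Set V} (hα : IsVertexCover G α)
    (hβ : IsVertexCover G β) {u v : V} (huv : G.Adj u v) (hu : u ∉ α ∩ β) (hv : v ∉ α ∩ β) :
    u ∈ α ∆ β := by
  have := hα huv
  have := hβ huv
  simp only [Set.mem_symmDiff, Set.mem_inter_iff] at *
  tauto

end Graph

section Reconfiguration

variable {V : Type*} {G : SimpleGraph V} {P : Set V → Prop} {α β γ : Set V}

def VCReconfigurable (G : SimpleGraph V) (P : Set V → Prop) (α β : Set V) : Prop :=
  ∃ (ℓ : ℕ) (f : ℕ → Set V), IsVCSchedule G ℓ f α β ∧ ∀ j ≤ ℓ, P (f j)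

lemma VCReconfigurable.single (hα : IsVertexCover G α) (hβ : IsVertexCover G β)
    (hαβ : IsIndepSet G (α ∆ β)) (hPα : P α) (hPβ : P β) : VCReconfigurable G P α β := by
  refine ⟨1, fun t => if t = 0 then α else β, ⟨by simp, by simp, ?_, ?_⟩, ?_⟩
  · intro j hj
    obtain rfl | rfl : j = 0 ∨ j = 1 := by omega
    exacts [hα, hβ]
  · intro j hj
    obtain rfl : j = 0 := by omega
    simpa using hαβ
  · intro j hj
    obtain rfl | rfl : j = 0 ∨ j = 1 := by omega
    exacts [hPα, hPβ]

lemma VCReconfigurable.trans (h₁ : VCReconfigurable G P α β) (h₂ : VCReconfigurable G P β γ) :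
    VCReconfigurable G P α γ := by
  obtain ⟨m, f, ⟨hf0, hfm, hfcov, hfind⟩, hfP⟩ := h₁
  obtain ⟨n, g, ⟨hg0, hgn, hgcov, hgind⟩, hgP⟩ := h₂
  set h : ℕ → Set V := fun t => if t ≤ m then f t else g (t - m)
  have hf : ∀ t ≤ m, h t = f t := fun t ht => if_pos ht
  have hg : ∀ t, m ≤ t → h t = g (t - m) := by
    intro t ht
    rcases ht.eq_or_lt with rfl | ht
    · rw [hf _ le_rfl, hfm, Nat.sub_self, hg0]
    · exact if_neg (by omega)
  have hboth : ∀ Q : Set V → Prop, (∀ j ≤ m, Q (f j)) → (∀ j ≤ n, Q (g j)) →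
      ∀ t ≤ m + n, Q (h t) := by
    intro Q hQf hQg t ht
    rcases le_total t m with htm | htm
    · exact hf t htm ▸ hQf t htm
    · exact hg t htm ▸ hQg (t - m) (by omega)
  refine ⟨m + n, h, ⟨?_, ?_, hboth _ hfcov hgcov, ?_⟩, hboth P hfP hgP⟩
  · rw [hf 0 (Nat.zero_le m), hf0]
  · rw [hg _ (Nat.le_add_right m n), Nat.add_sub_cancel_left, hgn]
  · intro t ht
    rcases lt_or_ge t m with htm | htm
    · rw [hf t htm.le, hf (t + 1) htm]
      exact hfind t htm
    · rw [hg t htm, hg (t + 1) (by omega), show t + 1 - m = t - m + 1 by omega]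
      exact hgind (t - m) (by omega)

end Reconfiguration

section Monotone

variable {V : Type*} {G : SimpleGraph V}

lemma exists_not_iff_succ_of_not_iff {P : ℕ → Prop} {a b : ℕ} (hab : a ≤ b)
    (h : ¬ (P a ↔ P b)) : ∃ t, a ≤ t ∧ t < b ∧ ¬ (P t ↔ P (t + 1)) := by
  induction b, hab using Nat.le_induction with
  | base => exact absurd Iff.rfl h
  | succ b hab ih =>
    by_cases hb : P a ↔ P b
    · exact ⟨b, hab, b.lt_succ_self, fun h' => h (hb.trans h')⟩
    · obtain ⟨t, hat, htb, ht⟩ := ih hb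
      exact ⟨t, hat, by omega, ht⟩

lemma Set.mem_symmDiff_iff_not_iff {s t : Set V} {v : V} : v ∈ s ∆ t ↔ ¬ (v ∈ s ↔ v ∈ t) := by
  rw [Set.mem_symmDiff]
  tauto

def ChangesAtMostOnce (f : ℕ → Set V) (ℓ : ℕ) : Prop :=
  ∀ v : V, ∀ j₁ j₂, j₁ < ℓ → j₂ < ℓ → v ∈ f j₁ ∆ f (j₁ + 1) → v ∈ f j₂ ∆ f (j₂ + 1) → j₁ = j₂

namespace ChangesAtMostOnce

variable {f : ℕ → Set V} {ℓ j : ℕ} {v : V}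

/-- A change of `v` before step `j` would have to be undone after it: two changes. -/
lemma mem_iff_mem_zero (hf : ChangesAtMostOnce f ℓ) (hv : v ∈ f 0 ↔ v ∈ f ℓ) (hj : j ≤ ℓ) :
    v ∈ f j ↔ v ∈ f 0 := by
  by_contra h
  obtain ⟨a, -, haj, ha⟩ :=
    exists_not_iff_succ_of_not_iff (P := (v ∈ f ·)) (Nat.zero_le j) (fun h' => h h'.symm)
  obtain ⟨b, hjb, hbℓ, hb⟩ :=
    exists_not_iff_succ_of_not_iff (P := (v ∈ f ·)) hj (fun h' => h (h'.trans hv.symm))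
  have := hf v a b (by omega) hbℓ (Set.mem_symmDiff_iff_not_iff.2 ha)
    (Set.mem_symmDiff_iff_not_iff.2 hb)
  omega

lemma mem_symmDiff_of_mem_symmDiff_succ (hf : ChangesAtMostOnce f ℓ) (hj : j < ℓ)
    (hv : v ∈ f j ∆ f (j + 1)) : v ∈ f 0 ∆ f ℓ := by
  by_contra h
  rw [Set.mem_symmDiff_iff_not_iff, not_not] at h
  rw [Set.mem_symmDiff_iff_not_iff, hf.mem_iff_mem_zero h hj.le, hf.mem_iff_mem_zero h hj] at hv
  exact hv Iff.rfl

end ChangesAtMostOnce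

structure IsMonotoneClusterSchedule (G : SimpleGraph V) (C : Set V) (ℓ : ℕ) (f : ℕ → Set V)
    (α β : Set V) : Prop where
  subset : ∀ j ≤ ℓ, f j ⊆ C
  first : f 0 = α ∩ C
  last : f ℓ = β ∩ C
  covers : ∀ j ≤ ℓ, ∀ u ∈ C, ∀ v ∈ C, G.Adj u v → u ∈ f j ∨ v ∈ f j
  indep : ∀ j < ℓ, IsIndepSet G (f j ∆ f (j + 1))
  changesAtMostOnce : ChangesAtMostOnce f ℓ

namespace IsMonotoneClusterSchedule

variable {C α β : Set V} {ℓ j : ℕ} {f : ℕ → Set V}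

lemma mem_of_mem_inter (hf : IsMonotoneClusterSchedule G C ℓ f α β) {v : V}
    (hv : v ∈ α ∩ β) (hvC : v ∈ C) (hj : j ≤ ℓ) : v ∈ f j := by
  have hv0 : v ∈ f 0 := hf.first ▸ ⟨hv.1, hvC⟩
  have hvℓ : v ∈ f ℓ := hf.last ▸ ⟨hv.2, hvC⟩
  exact (hf.changesAtMostOnce.mem_iff_mem_zero (iff_of_true hv0 hvℓ) hj).2 hv0

lemma symmDiff_succ_subset (hf : IsMonotoneClusterSchedule G C ℓ f α β) (hj : j < ℓ) :
    f j ∆ f (j + 1) ⊆ C ∩ α ∆ β := by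
  intro v hv
  have hvC : v ∈ C := by
    rcases Set.mem_symmDiff.1 hv with h | h
    exacts [hf.subset j hj.le h.1, hf.subset (j + 1) hj h.1]
  have hv' := hf.changesAtMostOnce.mem_symmDiff_of_mem_symmDiff_succ hj hv
  rw [hf.first, hf.last, ← Set.inter_symmDiff_distrib_right] at hv'
  exact ⟨hvC, hv'.1⟩

end IsMonotoneClusterSchedule

end Monotone

section Counting

variable {V ι : Type*} [Finite V] [Fintype ι] {C : ι → Set V}

lemma sum_ncard_inter_le (γ : Set V) (hC : Pairwise (Disjoint on C)) :
    ∑ i, (γ ∩ C i).ncard ≤ γ.ncard := by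
  rw [← finsum_eq_sum_of_fintype, ← Set.ncard_iUnion_of_finite (fun _ => Set.toFinite _)
    fun i j hij => (hC hij).mono Set.inter_subset_right Set.inter_subset_right]
  exact Set.ncard_le_ncard (Set.iUnion_subset fun _ => Set.inter_subset_left)

lemma ncard_union_iUnion_le {R S γ : Set V} {X : ι → Set V} {η c : ℝ} (hη : 0 ≤ η)
    (hRS : R ⊆ S) (hC : Pairwise (Disjoint on C))
    (hX : ∀ i, ((X i).ncard : ℝ) ≤ η * (γ ∩ C i).ncard + c) :
    ((R ∪ ⋃ i, X i).ncard : ℝ) ≤ η * γ.ncard + S.ncard + Fintype.card ι * c := by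
  have hunion : (R ∪ ⋃ i, X i).ncard ≤ S.ncard + ∑ i, (X i).ncard :=
    (Set.ncard_union_le _ _).trans
      (add_le_add (Set.ncard_le_ncard hRS) (Set.ncard_iUnion_le_of_fintype X))
  have hγ : (∑ i, (γ ∩ C i).ncard : ℝ) ≤ γ.ncard := by
    exact_mod_cast sum_ncard_inter_le γ hC
  calc ((R ∪ ⋃ i, X i).ncard : ℝ) ≤ S.ncard + ∑ i, ((X i).ncard : ℝ) := by exact_mod_cast hunion
    _ ≤ S.ncard + ∑ i, (η * (γ ∩ C i).ncard + c) := by gcongr with i; exact hX i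
    _ = η * ∑ i, ((γ ∩ C i).ncard : ℝ) + S.ncard + Fintype.card ι * c := by
      rw [Finset.sum_add_distrib, ← Finset.mul_sum, Finset.sum_const, nsmul_eq_mul,
        Finset.card_univ]
      ring
    _ ≤ η * γ.ncard + S.ncard + Fintype.card ι * c := by gcongr

end Counting

section Staggered

variable {V ι : Type*} {G : SimpleGraph V} {C : ι → Set V} {f : ι → ℕ → Set V}
  {α β R : Set V} {ℓ : ℕ} {d : ι → ℕ}

/-- Cluster `i` runs `f i` during the time window `[d i, d i + ℓ]` and rests at `f i 0` before it
and at `f i ℓ` after it (truncated subtraction does the former). -/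
def staggered (R : Set V) (f : ι → ℕ → Set V) (d : ι → ℕ) (ℓ t : ℕ) : Set V :=
  R ∪ ⋃ i, f i (min (t - d i) ℓ)

lemma staggered_zero : staggered R f d ℓ 0 = R ∪ ⋃ i, f i 0 := by
  simp [staggered]

lemma staggered_of_le {t : ℕ} (ht : ∀ i, d i + ℓ ≤ t) : staggered R f d ℓ t = R ∪ ⋃ i, f i ℓ := by
  have hclock : ∀ i, min (t - d i) ℓ = ℓ := fun i => by have := ht i; omega
  simp only [staggered, hclock]

lemma isIndepSet_symmDiff_staggered
    (hsep : Pairwise fun i j => ∀ u ∈ C i ∩ α ∆ β, ∀ v ∈ C j ∩ α ∆ β, ¬ G.Adj u v)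
    (hf : ∀ i, IsMonotoneClusterSchedule G (C i) ℓ (f i) α β) (t : ℕ) :
    IsIndepSet G (staggered R f d ℓ t ∆ staggered R f d ℓ (t + 1)) := by
  set s : ι → Set V := fun i => f i (min (t - d i) ℓ) ∆ f i (min (t + 1 - d i) ℓ)
  have hstep : ∀ i, IsIndepSet G (s i) ∧ s i ⊆ C i ∩ α ∆ β := by
    intro i
    rcases (by omega : min (t + 1 - d i) ℓ = min (t - d i) ℓ ∨
        min (t + 1 - d i) ℓ = min (t - d i) ℓ + 1 ∧ min (t - d i) ℓ < ℓ) with h | ⟨h, hlt⟩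
    · simp only [s, h, symmDiff_self, Set.bot_eq_empty, Set.empty_subset, and_true]
      exact fun _ _ hu => hu.elim
    · simp only [s, h]
      exact ⟨(hf i).indep _ hlt, (hf i).symmDiff_succ_subset hlt⟩
  refine (isIndepSet_iUnion (fun i => (hstep i).1) fun i j hij u hu v hv =>
    hsep hij u ((hstep i).2 hu) v ((hstep j).2 hv)).mono ?_
  refine subset_trans (fun v hv => ?_) Set.iUnion_symmDiff_iUnion_subset
  simp only [staggered, Set.mem_symmDiff, Set.mem_union] at hv ⊢
  tauto

lemma isVertexCover_staggered {S : Set V} (hα : IsVertexCover G α) (hβ : IsVertexCover G β)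
    (hcover : S ∪ ⋃ i, C i = Set.univ)
    (hsep : Pairwise fun i j => ∀ u ∈ C i ∩ α ∆ β, ∀ v ∈ C j ∩ α ∆ β, ¬ G.Adj u v)
    (hf : ∀ i, IsMonotoneClusterSchedule G (C i) ℓ (f i) α β) (t : ℕ) :
    IsVertexCover G (staggered (S ∩ (α ∪ β)) f d ℓ t) := by
  have hloc : ∀ w, w ∈ S ∨ ∃ i, w ∈ C i := fun w => by
    have hw : w ∈ S ∪ ⋃ i, C i := hcover ▸ Set.mem_univ w
    simpa using hw
  have hclock : ∀ i, min (t - d i) ℓ ≤ ℓ := fun i => min_le_right _ _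
  have hinter : ∀ w ∈ α ∩ β, w ∈ staggered (S ∩ (α ∪ β)) f d ℓ t := by
    intro w hw
    rcases hloc w with hwS | ⟨i, hwi⟩
    · exact Or.inl ⟨hwS, Or.inl hw.1⟩
    · exact Or.inr (Set.mem_iUnion_of_mem i ((hf i).mem_of_mem_inter hw hwi (hclock i)))
  intro u v huv
  by_cases hu : u ∈ α ∩ β
  · exact Or.inl (hinter u hu)
  by_cases hv : v ∈ α ∩ β
  · exact Or.inr (hinter v hv)
  have hu' := hα.mem_symmDiff_of_adj hβ huv hu hv
  have hv' := hα.mem_symmDiff_of_adj hβ huv.symm hv hu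
  rcases hloc u with huS | ⟨i, hui⟩
  · exact Or.inl (Or.inl ⟨huS, Set.symmDiff_subset_union hu'⟩)
  rcases hloc v with hvS | ⟨j, hvj⟩
  · exact Or.inr (Or.inl ⟨hvS, Set.symmDiff_subset_union hv'⟩)
  obtain rfl : i = j := by
    by_contra hij
    exact hsep hij u ⟨hui, hu'⟩ v ⟨hvj, hv'⟩ huv
  rcases (hf i).covers _ (hclock i) u hui v hvj huv with h | h
  · exact Or.inl (Or.inr (Set.mem_iUnion_of_mem i h))
  · exact Or.inr (Or.inr (Set.mem_iUnion_of_mem i h))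

lemma ncard_staggered_le [Finite V] [Fintype ι] {S : Set V} {η c : ℝ} (hη : 1 ≤ η) (hc : 0 ≤ c)
    (hC : Pairwise (Disjoint on C)) (hf : ∀ i, IsMonotoneClusterSchedule G (C i) ℓ (f i) α β)
    (hcard : ∀ i, ∀ j ≤ ℓ, ((f i j).ncard : ℝ) ≤
      η * (max ((α ∩ C i).ncard) ((β ∩ C i).ncard) : ℕ) + c)
    (hd : ∀ i, d i = 0 ∧ (β ∩ C i).ncard ≤ (α ∩ C i).ncard ∨
      d i = ℓ ∧ (α ∩ C i).ncard ≤ (β ∩ C i).ncard) (t : ℕ) :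
    ((staggered (S ∩ (α ∪ β)) f d ℓ t).ncard : ℝ) ≤
      η * (max α.ncard β.ncard : ℕ) + S.ncard + Fintype.card ι * c := by
  have hrest : ∀ n : ℕ, (n : ℝ) ≤ η * n + c := fun n => by nlinarith [(n.cast_nonneg : (0 : ℝ) ≤ n)]
  obtain ⟨γ, hγ, hbound⟩ : ∃ γ : Set V, γ.ncard ≤ max α.ncard β.ncard ∧
      ∀ i, ((f i (min (t - d i) ℓ)).ncard : ℝ) ≤ η * (γ ∩ C i).ncard + c := by
    rcases le_total t ℓ with htℓ | htℓ
    · refine ⟨α, le_max_left _ _, fun i => ?_⟩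
      rcases hd i with ⟨hdi, hi⟩ | ⟨hdi, -⟩
      · simpa only [max_eq_left hi] using hcard i _ (min_le_right _ _)
      · rw [hdi, show min (t - ℓ) ℓ = 0 by omega, (hf i).first]
        exact hrest _
    · refine ⟨β, le_max_right _ _, fun i => ?_⟩
      rcases hd i with ⟨hdi, -⟩ | ⟨hdi, hi⟩
      · rw [hdi, show min (t - 0) ℓ = ℓ by omega, (hf i).last]
        exact hrest _
      · simpa only [max_eq_right hi] using hcard i _ (min_le_right _ _)
  calc ((staggered (S ∩ (α ∪ β)) f d ℓ t).ncard : ℝ)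
      ≤ η * γ.ncard + S.ncard + Fintype.card ι * c :=
        ncard_union_iUnion_le (by linarith) Set.inter_subset_left hC hbound
    _ ≤ η * (max α.ncard β.ncard : ℕ) + S.ncard + Fintype.card ι * c := by
        gcongr

lemma inter_union_iUnion_inter_eq {S : Set V} (hcover : S ∪ ⋃ i, C i = Set.univ) (α β : Set V) :
    S ∩ (α ∪ β) ∪ ⋃ i, α ∩ C i = α ∪ S ∩ β := by
  rw [← Set.inter_iUnion]
  ext v
  have hv : v ∈ S ∪ ⋃ i, C i := hcover ▸ Set.mem_univ v
  simp only [Set.mem_union, Set.mem_inter_iff] at hv ⊢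
  tauto

lemma VCReconfigurable.of_staggered {P : Set V → Prop} {S : Set V}
    (hα : IsVertexCover G α) (hβ : IsVertexCover G β) (hcover : S ∪ ⋃ i, C i = Set.univ)
    (hsep : Pairwise fun i j => ∀ u ∈ C i ∩ α ∆ β, ∀ v ∈ C j ∩ α ∆ β, ¬ G.Adj u v)
    (hf : ∀ i, IsMonotoneClusterSchedule G (C i) ℓ (f i) α β) (hd : ∀ i, d i ≤ ℓ)
    (hP : ∀ t, P (staggered (S ∩ (α ∪ β)) f d ℓ t)) (hPmono : ∀ ⦃s t⦄, s ⊆ t → P t → P s) :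
    VCReconfigurable G P α β := by
  set M := staggered (S ∩ (α ∪ β)) f d ℓ
  have hMcov t : IsVertexCover G (M t) := isVertexCover_staggered hα hβ hcover hsep hf t
  have hM0 : M 0 = α ∪ S ∩ β := by
    simp only [M]
    rw [staggered_zero, funext fun i => (hf i).first, inter_union_iUnion_inter_eq hcover]
  have hMend : M (2 * ℓ) = β ∪ S ∩ α := by
    simp only [M]
    rw [staggered_of_le fun i => by have := hd i; omega, funext fun i => (hf i).last,
      Set.union_comm α β, inter_union_iUnion_inter_eq hcover]
  have hstart : VCReconfigurable G P α (M 0) := by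
    refine .single hα (hMcov 0) ?_ (hPmono (hM0 ▸ Set.subset_union_left) (hP 0)) (hP 0)
    rw [hM0]
    exact hα.isIndepSet_symmDiff_union _
  have hend : VCReconfigurable G P (M (2 * ℓ)) β := by
    refine .single (hMcov _) hβ ?_ (hP _) (hPmono (hMend ▸ Set.subset_union_left) (hP _))
    rw [hMend, symmDiff_comm]
    exact hβ.isIndepSet_symmDiff_union _
  exact (hstart.trans ⟨2 * ℓ, M, ⟨rfl, rfl, fun t _ => hMcov t,
    fun t _ => isIndepSet_symmDiff_staggered hsep hf t⟩, fun t _ => hP t⟩).trans hend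
end Staggered

theorem decomposition_to_schedule_general {V : Type*} [Fintype V] (G : SimpleGraph V)
    (α β : Set V) (hα : IsVertexCover G α) (hβ : IsVertexCover G β)
    (η c : ℝ) (hη1 : 1 ≤ η) (hc : 0 ≤ c)
    (k : ℕ) (C : Fin k → Set V) (S : Set V)
    (hdisj : ∀ i j, i ≠ j → Disjoint (C i) (C j))
    (hcover : S ∪ ⋃ i, C i = Set.univ)
    (hsep : ∀ i j, i ≠ j → ∀ u ∈ C i ∩ symmDiff α β, ∀ v ∈ C j ∩ symmDiff α β,
      ¬ G.Adj u v)
    (ℓ : ℕ)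
    (hsched : ∀ i, ∃ f : ℕ → Set V,
      (∀ j ≤ ℓ, f j ⊆ C i) ∧ f 0 = α ∩ C i ∧ f ℓ = β ∩ C i ∧
      (∀ j ≤ ℓ, ∀ u ∈ C i, ∀ v ∈ C i, G.Adj u v → u ∈ f j ∨ v ∈ f j) ∧
      (∀ j < ℓ, IsIndepSet G (symmDiff (f j) (f (j + 1)))) ∧
      (∀ v : V, ∀ j₁ j₂, j₁ < ℓ → j₂ < ℓ → v ∈ symmDiff (f j₁) (f (j₁ + 1)) →
        v ∈ symmDiff (f j₂) (f (j₂ + 1)) → j₁ = j₂) ∧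
      (∀ j ≤ ℓ, ((f j).ncard : ℝ) ≤
        η * (max ((α ∩ C i).ncard) ((β ∩ C i).ncard) : ℕ) + c)) :
    ∃ (ℓ' : ℕ) (g : ℕ → Set V), IsVCSchedule G ℓ' g α β ∧
      ∀ j ≤ ℓ', ((g j).ncard : ℝ) ≤
        η * (max α.ncard β.ncard : ℕ) + S.ncard + k * c := by
  classical
  choose f hsub h0 hℓ hcov hind hmono hcard using hsched
  have hf i : IsMonotoneClusterSchedule G (C i) ℓ (f i) α β :=
    ⟨hsub i, h0 i, hℓ i, hcov i, hind i, hmono i⟩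
  set d : Fin k → ℕ := fun i => if (β ∩ C i).ncard < (α ∩ C i).ncard then 0 else ℓ
  have hd i : d i = 0 ∧ (β ∩ C i).ncard ≤ (α ∩ C i).ncard ∨
      d i = ℓ ∧ (α ∩ C i).ncard ≤ (β ∩ C i).ncard := by
    by_cases h : (β ∩ C i).ncard < (α ∩ C i).ncard
    · exact Or.inl ⟨if_pos h, h.le⟩
    · exact Or.inr ⟨if_neg h, not_lt.1 h⟩
  show VCReconfigurable G
    (fun s => (s.ncard : ℝ) ≤ η * (max α.ncard β.ncard : ℕ) + S.ncard + k * c) α β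
  refine .of_staggered (d := d) hα hβ hcover hsep hf
    (fun i => by rcases hd i with ⟨h, -⟩ | ⟨h, -⟩ <;> omega)
    (fun t => by simpa only [Fintype.card_fin] using ncard_staggered_le hη1 hc hdisj hf hcard hd t)
    fun s t hst ht => le_trans ?_ ht
  exact_mod_cast Set.ncard_le_ncard hst

/-- Decomposition-to-schedule lemma: given a partition of `V` into clusters `C 1, …, C k`
and a separator set `S` such that no edge joins `C i \ Z` and `C j \ Z` for `i ≠ j`,
where `Z = V \ (α ⊕ β)`, if each cluster admits a monotone length-`ℓ` reconfiguration
schedule from `α ∩ C i` to `β ∩ C i` (covering all edges inside `C i`) whose intermediate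
covers have size at most `η·max(|α ∩ C i|, |β ∩ C i|) + c`, then `G` admits a
reconfiguration schedule from `α` to `β` whose intermediate vertex covers have size at most
`η·max(|α|,|β|) + |S| + k·c`. -/
theorem decomposition_to_schedule {V : Type*} [Fintype V] (G : SimpleGraph V)
    (α β : Set V) (hα : IsVertexCover G α) (hβ : IsVertexCover G β)
    (η c : ℝ) (hη1 : 1 ≤ η) (hη2 : η ≤ 2) (hc : 0 ≤ c)
    (k : ℕ) (C : Fin k → Set V) (S : Set V)
    (hdisj : ∀ i j, i ≠ j → Disjoint (C i) (C j))
    (hdisjS : ∀ i, Disjoint (C i) S)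
    (hcover : S ∪ ⋃ i, C i = Set.univ)
    (hsep : ∀ i j, i ≠ j → ∀ u ∈ C i ∩ symmDiff α β, ∀ v ∈ C j ∩ symmDiff α β,
      ¬ G.Adj u v)
    (ℓ : ℕ)
    (hsched : ∀ i, ∃ f : ℕ → Set V,
      (∀ j ≤ ℓ, f j ⊆ C i) ∧ f 0 = α ∩ C i ∧ f ℓ = β ∩ C i ∧
      (∀ j ≤ ℓ, ∀ u ∈ C i, ∀ v ∈ C i, G.Adj u v → u ∈ f j ∨ v ∈ f j) ∧
      (∀ j < ℓ, IsIndepSet G (symmDiff (f j) (f (j + 1)))) ∧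
      (∀ v : V, ∀ j₁ j₂, j₁ < ℓ → j₂ < ℓ → v ∈ symmDiff (f j₁) (f (j₁ + 1)) →
        v ∈ symmDiff (f j₂) (f (j₂ + 1)) → j₁ = j₂) ∧
      (∀ j ≤ ℓ, ((f j).ncard : ℝ) ≤
        η * (max ((α ∩ C i).ncard) ((β ∩ C i).ncard) : ℕ) + c)) :
    ∃ (ℓ' : ℕ) (g : ℕ → Set V), IsVCSchedule G ℓ' g α β ∧
      ∀ j ≤ ℓ', ((g j).ncard : ℝ) ≤
        η * (max α.ncard β.ncard : ℕ) + S.ncard + k * c :=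
  decomposition_to_schedule_general G α β hα hβ η c hη1 hc k C S hdisj hcover hsep ℓ hsched
end
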